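/- For a compact IRU-set 𝒜 of nonnegative N×N matrices and α > 0: max_{A∈𝒜} ρ(A) < α if and only if there exists a strictly positive vector v with A·v < α·v componentwise (strict in every coordinate) for all A ∈ 𝒜. -/

import Mathlib

/-!
Backward direction: if `μ` is an eigenvalue of `A` with eigenvector `w`, then `|μ| |w| ≤ A |w|`,
and evaluating at the coordinate maximising `|wᵢ| / vᵢ` gives `|μ| ≤ maxᵢ (A v)ᵢ / vᵢ < α`.

Forward direction (policy iteration): a nonnegative `u ≠ 0` with `A u ≥ α u` forces `ρ(A) ≥ α`
by Gelfand's formula, so for `A ∈ 𝒜` the matrix `α - A` is invertible and `(α - A) w ≥ 0`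
implies `w ≥ 0`. Let `A₀ ∈ 𝒜` maximise the entry sum of `v_A = (α - A)⁻¹ 𝟙`, a continuous
function on the compact set `𝒜`. If some admissible row `b` for index `i` had
`b ⬝ v_{A₀} > α (v_{A₀})ᵢ - 1`, then for `A₀` with row `i` replaced by `b` the vector `v_{A₀}`
would be a strict subsolution, hence strictly below the new resolvent vector, contradicting
maximality. So `A v ≤ α v - 𝟙` for all `A ∈ 𝒜` with `v = v_{A₀} > 0`.
-/

open Matrix

/-- Spectral radius of a real square matrix: the maximum modulus of its complex eigenvalues. -/
noncomputable def specRad {N : ℕ} (A : Matrix (Fin N) (Fin N) ℝ) : ℝ :=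
  sSup ((fun z : ℂ => ‖z‖) '' spectrum ℂ (A.map (Complex.ofReal)))

/-- The IRU-set (independent row uncertainty set) determined by row sets `rows i ⊆ ℝ^M`:
all `N × M` matrices whose `i`-th row belongs to `rows i`. -/
def IRU {N M : ℕ} (rows : Fin N → Set (Fin M → ℝ)) : Set (Matrix (Fin N) (Fin M) ℝ) :=
  {A | ∀ i, A i ∈ rows i}

open Filter Topology

section Nonneg

variable {n : Type*} [Fintype n]

lemma mulVec_mono_of_nonneg {C : Matrix n n ℝ} (hC : ∀ i, 0 ≤ C i) {x y : n → ℝ}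
    (hxy : x ≤ y) : C *ᵥ x ≤ C *ᵥ y :=
  fun i => dotProduct_le_dotProduct_of_nonneg_left hxy (hC i)

lemma mulVec_nonneg_of_nonneg {C : Matrix n n ℝ} (hC : ∀ i, 0 ≤ C i) {x : n → ℝ}
    (hx : 0 ≤ x) : 0 ≤ C *ᵥ x :=
  fun i => dotProduct_nonneg_of_nonneg (hC i) hx

lemma pow_smul_le_pow_mulVec [DecidableEq n] {C : Matrix n n ℝ} (hC : ∀ i, 0 ≤ C i)
    {α : ℝ} (hα : 0 ≤ α) {u : n → ℝ} (h : α • u ≤ C *ᵥ u) (k : ℕ) :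
    α ^ k • u ≤ (C ^ k) *ᵥ u := by
  induction k with
  | zero => simp
  | succ k ih =>
    calc α ^ (k + 1) • u = α ^ k • (α • u) := by rw [pow_succ, mul_smul]
      _ ≤ α ^ k • (C *ᵥ u) := smul_le_smul_of_nonneg_left h (pow_nonneg hα k)
      _ = C *ᵥ (α ^ k • u) := (mulVec_smul C _ u).symm
      _ ≤ C *ᵥ (C ^ k *ᵥ u) := mulVec_mono_of_nonneg hC ih
      _ = C ^ (k + 1) *ᵥ u := by rw [mulVec_mulVec, pow_succ']

end Nonneg

lemma exists_mulVec_eq_smul_of_mem_spectrum {n K : Type*} [Fintype n] [DecidableEq n] [Field K]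
    {M : Matrix n n K} {μ : K} (hμ : μ ∈ spectrum K M) : ∃ w ≠ 0, M *ᵥ w = μ • w := by
  rw [← Matrix.spectrum_toLin'] at hμ
  obtain ⟨w, hw⟩ := (Module.End.hasEigenvalue_iff_mem_spectrum.2 hμ).exists_hasEigenvector
  exact ⟨w, hw.2, by simpa using hw.apply_eq_smul⟩

lemma eventually_norm_pow_lt_of_spectralRadius_lt {A : Type*} [NormedRing A] [NormedAlgebra ℂ A]
    [CompleteSpace A] (a : A) {γ : ℝ} (h : spectralRadius ℂ a < ENNReal.ofReal γ) :
    ∀ᶠ k : ℕ in atTop, ‖a ^ k‖ < γ ^ k := by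
  filter_upwards
    [(spectrum.pow_norm_pow_one_div_tendsto_nhds_spectralRadius a).eventually_lt_const h,
      eventually_ne_atTop 0] with k hk hk0
  have hroot : ‖a ^ k‖ ^ (1 / k : ℝ) < γ := (ENNReal.ofReal_lt_ofReal_iff'.1 hk).1
  calc ‖a ^ k‖ = (‖a ^ k‖ ^ (1 / k : ℝ)) ^ k := by
        rw [one_div, Real.rpow_inv_natCast_pow (norm_nonneg _) hk0]
    _ < γ ^ k := pow_lt_pow_left₀ hroot (by positivity) hk0

section

variable {N : ℕ}

lemma specRad_nonneg (A : Matrix (Fin N) (Fin N) ℝ) : 0 ≤ specRad A :=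
  Real.sSup_nonneg (by rintro _ ⟨z, -, rfl⟩; exact norm_nonneg z)

theorem specRad_le_of_mulVec_le {A : Matrix (Fin N) (Fin N) ℝ} (hA : ∀ i, 0 ≤ A i)
    {v : Fin N → ℝ} (hv : ∀ i, 0 < v i) {β : ℝ} (hβ : 0 ≤ β) (h : A *ᵥ v ≤ β • v) :
    specRad A ≤ β := by
  refine Real.sSup_le ?_ hβ
  rintro _ ⟨μ, hμ, rfl⟩
  obtain ⟨w, hw0, hw⟩ := exists_mulVec_eq_smul_of_mem_spectrum hμ
  obtain ⟨j, hj⟩ := Function.ne_iff.1 hw0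
  have : Nonempty (Fin N) := ⟨j⟩
  obtain ⟨i, hi⟩ := Finite.exists_max fun i => ‖w i‖ / v i
  set t := ‖w i‖ / v i
  have hwt : ∀ j, ‖w j‖ ≤ t * v j := fun j => (div_le_iff₀ (hv j)).1 (hi j)
  have hwi : 0 < ‖w i‖ :=
    (div_pos (norm_pos_iff.2 hj) (hv j)).trans_le (hi j) |> (div_pos_iff_of_pos_right (hv i)).1
  have key : ‖μ‖ * ‖w i‖ ≤ β * ‖w i‖ :=
    calc ‖μ‖ * ‖w i‖ = ‖∑ j, (A i j : ℂ) * w j‖ := by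
          rw [← norm_mul, ← smul_eq_mul, ← Pi.smul_apply, ← hw]; rfl
      _ ≤ ∑ j, A i j * (t * v j) := by
          refine (norm_sum_le _ _).trans (Finset.sum_le_sum fun j _ => ?_)
          rw [norm_mul, Complex.norm_real, Real.norm_of_nonneg (hA i j)]
          exact mul_le_mul_of_nonneg_left (hwt j) (hA i j)
      _ = t * (A *ᵥ v) i := by
          simp only [mulVec, dotProduct, Finset.mul_sum]
          exact Finset.sum_congr rfl fun j _ => by ring
      _ ≤ t * (β * v i) := mul_le_mul_of_nonneg_left (h i) (div_nonneg (norm_nonneg _) (hv i).le)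
      _ = β * ‖w i‖ := by
          have := (hv i).ne'
          simp only [t]; field_simp
  exact le_of_mul_le_mul_right key hwi

theorem specRad_lt_of_mulVec_lt {A : Matrix (Fin N) (Fin N) ℝ} (hA : ∀ i, 0 ≤ A i)
    {v : Fin N → ℝ} (hv : ∀ i, 0 < v i) {α : ℝ} (hα : 0 < α) (h : ∀ i, (A *ᵥ v) i < α * v i) :
    specRad A < α := by
  have hnear : ∀ᶠ β in 𝓝 α, 0 ≤ β ∧ A *ᵥ v ≤ β • v :=
    ((eventually_gt_nhds hα).mono fun _ => le_of_lt).and <| eventually_all.2 fun i =>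
      (((continuous_id.mul continuous_const).tendsto α).eventually_const_lt (h i)).mono
        fun _ => le_of_lt
  obtain ⟨β, ⟨hβ, hAv⟩, hβα⟩ :=
    ((hnear.filter_mono nhdsWithin_le_nhds).and (self_mem_nhdsWithin (s := Set.Iio α))).exists
  exact (specRad_le_of_mulVec_le hA hv hβ hAv).trans_lt hβα

lemma map_ofReal_pow_mulVec {n : Type*} [Fintype n] [DecidableEq n] (C : Matrix n n ℝ)
    (u : n → ℝ) (k : ℕ) (i : n) :
    ((C.map Complex.ofReal) ^ k *ᵥ (Complex.ofReal ∘ u)) i = ((C ^ k *ᵥ u) i : ℂ) := by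
  have hpow : (C.map Complex.ofReal) ^ k = (C ^ k).map Complex.ofReal :=
    (map_pow Complex.ofRealHom.mapMatrix C k).symm
  rw [hpow]
  exact (RingHom.map_mulVec Complex.ofRealHom (C ^ k) u i).symm

lemma norm_le_specRad {C : Matrix (Fin N) (Fin N) ℝ} {z : ℂ}
    (hz : z ∈ spectrum ℂ (C.map Complex.ofReal)) : ‖z‖ ≤ specRad C :=
  le_csSup ((C.map Complex.ofReal).finite_spectrum.image _).bddAbove ⟨z, hz, rfl⟩

section LinftyOpNorm

attribute [local instance] Matrix.linftyOpNormedRing Matrix.linftyOpNormedAlgebra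

lemma spectralRadius_lt_of_specRad_lt [Nonempty (Fin N)] {C : Matrix (Fin N) (Fin N) ℝ}
    {γ : ℝ} (h : specRad C < γ) :
    spectralRadius ℂ (C.map Complex.ofReal) < ENNReal.ofReal γ :=
  spectrum.spectralRadius_lt_of_forall_lt (r := γ.toNNReal) _ fun _ hz =>
    Real.lt_toNNReal_iff_coe_lt.2 ((norm_le_specRad hz).trans_lt h)

theorem le_specRad_of_smul_le_mulVec {C : Matrix (Fin N) (Fin N) ℝ} (hC : ∀ i, 0 ≤ C i)
    {u : Fin N → ℝ} (hu : 0 ≤ u) (hu0 : u ≠ 0) {α : ℝ} (h : α • u ≤ C *ᵥ u) :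
    α ≤ specRad C := by
  obtain ⟨i, hi⟩ := Function.ne_iff.1 hu0
  replace hi : 0 < u i := (hu i).lt_of_ne' hi
  have : Nonempty (Fin N) := ⟨i⟩
  by_contra! hρ
  obtain ⟨γ, hργ, hγα⟩ := exists_between hρ
  have hγ : 0 < γ := (specRad_nonneg C).trans_lt hργ
  have hα : 0 ≤ α := (hγ.trans hγα).le
  set M := C.map Complex.ofReal
  set uc : Fin N → ℂ := Complex.ofReal ∘ u
  -- `Cᵏ u ≥ αᵏ u` forces `‖Mᵏ‖` to grow like `αᵏ`, but Gelfand's formula bounds it by `γᵏ`.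
  have hgrowth (k : ℕ) : α ^ k * u i ≤ ‖M ^ k‖ * ‖uc‖ := by
    have hk : α ^ k * u i ≤ (C ^ k *ᵥ u) i := pow_smul_le_pow_mulVec hC hα h k i
    calc α ^ k * u i ≤ (C ^ k *ᵥ u) i := hk
      _ = ‖(M ^ k *ᵥ uc) i‖ := by
          rw [map_ofReal_pow_mulVec, Complex.norm_real,
            Real.norm_of_nonneg (hk.trans' (mul_nonneg (pow_nonneg hα k) (hu i)))]
      _ ≤ ‖M ^ k *ᵥ uc‖ := norm_le_pi_norm _ i
      _ ≤ ‖M ^ k‖ * ‖uc‖ := linfty_opNorm_mulVec _ _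
  obtain ⟨k, hsmall, hlarge⟩ :=
    ((eventually_norm_pow_lt_of_spectralRadius_lt M (spectralRadius_lt_of_specRad_lt hργ)).and
      ((tendsto_pow_atTop_atTop_of_one_lt ((one_lt_div hγ).2 hγα)).eventually_gt_atTop
        (‖uc‖ / u i))).exists
  rw [div_pow, lt_div_iff₀ (pow_pos hγ k), div_mul_eq_mul_div, div_lt_iff₀ hi] at hlarge
  refine (hgrowth k).not_gt ?_
  calc ‖M ^ k‖ * ‖uc‖ ≤ γ ^ k * ‖uc‖ := by gcongr
    _ < α ^ k * u i := by linarith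

end LinftyOpNorm

theorem nonneg_of_mulVec_le_smul {C : Matrix (Fin N) (Fin N) ℝ} (hC : ∀ i, 0 ≤ C i) {α : ℝ}
    (hρ : specRad C < α) {w : Fin N → ℝ} (h : C *ᵥ w ≤ α • w) : 0 ≤ w := by
  have hα : 0 ≤ α := (specRad_nonneg C).trans hρ.le
  -- The negative part `u` of `w` satisfies `α u ≤ C u`, which forces `u = 0`.
  set u := -w ⊔ 0
  have hu : 0 ≤ u := le_sup_right
  have hCu : α • u ≤ C *ᵥ u := fun i => by
    have hneg : α * -w i ≤ (C *ᵥ -w) i := by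
      rw [mulVec_neg, Pi.neg_apply, mul_neg, neg_le_neg_iff]; exact h i
    calc α * max (-w i) 0 = max (α * -w i) 0 := by rw [mul_max_of_nonneg _ _ hα, mul_zero]
      _ ≤ (C *ᵥ u) i := max_le (hneg.trans (mulVec_mono_of_nonneg hC le_sup_left i))
          (mulVec_nonneg_of_nonneg hC hu i)
  by_contra hw
  have hu0 : u ≠ 0 := fun hu0 => hw (by simpa [u] using hu0)
  exact hρ.not_ge (le_specRad_of_smul_le_mulVec hC hu hu0 hCu)

lemma isUnit_det_smul_one_sub {C : Matrix (Fin N) (Fin N) ℝ} (hC : ∀ i, 0 ≤ C i) {α : ℝ}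
    (hρ : specRad C < α) : IsUnit (α • (1 : Matrix (Fin N) (Fin N) ℝ) - C).det := by
  rw [isUnit_iff_ne_zero, Ne, ← exists_mulVec_eq_zero_iff]
  rintro ⟨w, hw0, hw⟩
  rw [sub_mulVec, smul_mulVec, one_mulVec, sub_eq_zero, eq_comm] at hw
  have hpos := nonneg_of_mulVec_le_smul hC hρ hw.le
  have hneg := nonneg_of_mulVec_le_smul hC hρ (w := -w) (by rw [mulVec_neg, hw, smul_neg])
  exact hw0 (le_antisymm (neg_nonneg.1 hneg) hpos)

/-- When `α • 1 - C` is singular, `⁻¹` returns the junk value `0`. -/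
noncomputable def resolventVec (α : ℝ) (C : Matrix (Fin N) (Fin N) ℝ) : Fin N → ℝ :=
  (α • 1 - C)⁻¹ *ᵥ 1

lemma mulVec_resolventVec {α : ℝ} {C : Matrix (Fin N) (Fin N) ℝ}
    (hC : IsUnit (α • (1 : Matrix (Fin N) (Fin N) ℝ) - C).det) :
    C *ᵥ resolventVec α C = α • resolventVec α C - 1 := by
  have h : (α • 1 - C) *ᵥ resolventVec α C = 1 := by
    rw [resolventVec, mulVec_mulVec, mul_nonsing_inv _ hC, one_mulVec]
  rw [sub_mulVec, smul_mulVec, one_mulVec] at h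
  rw [← h, sub_sub_cancel]

lemma continuousOn_resolventVec {α : ℝ} {S : Set (Matrix (Fin N) (Fin N) ℝ)}
    (hS : ∀ C ∈ S, IsUnit (α • (1 : Matrix (Fin N) (Fin N) ℝ) - C).det) :
    ContinuousOn (resolventVec α) S := by
  intro C hC
  obtain ⟨d, hd⟩ := hS C hC
  have hinv : ContinuousAt Inv.inv (α • 1 - C) :=
    continuousAt_matrix_inv _ (hd ▸ NormedRing.inverse_continuousAt d)
  exact ((continuous_id.matrix_mulVec continuous_const).continuousAt.comp
    (hinv.comp (continuous_const.sub continuous_id).continuousAt)).continuousWithinAt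

theorem lt_resolventVec_of_lt_mulVec {C : Matrix (Fin N) (Fin N) ℝ} (hC : ∀ i, 0 ≤ C i) {α : ℝ}
    (hρ : specRad C < α) {v : Fin N → ℝ} (hv : α • v - 1 < C *ᵥ v) :
    v < resolventVec α C := by
  have hα : 0 < α := (specRad_nonneg C).trans_lt hρ
  set d := resolventVec α C - v
  have hgap : α • d - C *ᵥ d = C *ᵥ v - (α • v - 1) := by
    rw [mulVec_sub, mulVec_resolventVec (isUnit_det_smul_one_sub hC hρ), smul_sub]
    abel
  have hd : 0 ≤ d := nonneg_of_mulVec_le_smul hC hρ (sub_nonneg.1 (hgap ▸ sub_nonneg.2 hv.le))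
  obtain ⟨-, i, hi⟩ := Pi.lt_def.1 hv
  have hdi : 0 < α * d i := by
    have := congrFun hgap i
    simp only [Pi.sub_apply, Pi.smul_apply, Pi.one_apply, smul_eq_mul] at this hi
    have hCd : 0 ≤ (C *ᵥ d) i := mulVec_nonneg_of_nonneg hC hd i
    linarith
  exact Pi.lt_def.2 ⟨sub_nonneg.1 hd, i, sub_pos.1 (pos_of_mul_pos_right hdi hα.le)⟩

section IRU

variable {rows : Fin N → Set (Fin N → ℝ)}

lemma isCompact_IRU (hcomp : ∀ i, IsCompact (rows i)) : IsCompact (IRU rows) := by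
  have h : IRU rows = Set.univ.pi rows := Set.ext fun _ => Set.mem_univ_pi.symm
  exact h ▸ isCompact_univ_pi hcomp

lemma nonempty_IRU (hne : ∀ i, (rows i).Nonempty) : (IRU rows).Nonempty :=
  ⟨fun i => (hne i).some, fun i => (hne i).some_mem⟩

lemma updateRow_mem_IRU {A : Matrix (Fin N) (Fin N) ℝ} (hA : A ∈ IRU rows) {i : Fin N}
    {b : Fin N → ℝ} (hb : b ∈ rows i) : A.updateRow i b ∈ IRU rows := by
  intro j
  rcases eq_or_ne j i with rfl | hj
  · simpa using hb
  · simpa [hj] using hA j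

lemma row_nonneg_of_mem_IRU (hnn : ∀ i, ∀ a ∈ rows i, ∀ j, 0 ≤ a j)
    {A : Matrix (Fin N) (Fin N) ℝ} (hA : A ∈ IRU rows) (i : Fin N) : 0 ≤ A i :=
  hnn i _ (hA i)

theorem exists_pos_forall_mulVec_le_smul_sub_one (hne : ∀ i, (rows i).Nonempty)
    (hcomp : ∀ i, IsCompact (rows i)) (hnn : ∀ i, ∀ a ∈ rows i, ∀ j, 0 ≤ a j) {α : ℝ}
    (hα : 0 < α) (hρ : ∀ A ∈ IRU rows, specRad A < α) :
    ∃ v : Fin N → ℝ, (∀ i, 0 < v i) ∧ ∀ A ∈ IRU rows, A *ᵥ v ≤ α • v - 1 := by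
  have hC := fun A hA => row_nonneg_of_mem_IRU hnn (A := A) hA
  have hcont : ContinuousOn (fun A => ∑ i, resolventVec α A i) (IRU rows) :=
    continuousOn_finsetSum _ fun i _ => (continuous_apply i).comp_continuousOn
      (continuousOn_resolventVec fun A hA => isUnit_det_smul_one_sub (hC A hA) (hρ A hA))
  obtain ⟨A₀, hA₀, hmax⟩ := (isCompact_IRU hcomp).exists_isMaxOn (nonempty_IRU hne) hcont
  set v := resolventVec α A₀
  have hA₀v : A₀ *ᵥ v = α • v - 1 :=
    mulVec_resolventVec (isUnit_det_smul_one_sub (hC A₀ hA₀) (hρ A₀ hA₀))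
  have hv : 0 ≤ v :=
    nonneg_of_mulVec_le_smul (hC A₀ hA₀) (hρ A₀ hA₀) (hA₀v ▸ sub_le_self _ zero_le_one)
  refine ⟨v, fun i => ?_, fun A hA i => ?_⟩
  · have hA₀vi : 0 ≤ (A₀ *ᵥ v) i := mulVec_nonneg_of_nonneg (hC A₀ hA₀) hv i
    rw [hA₀v] at hA₀vi
    simp only [Pi.sub_apply, Pi.smul_apply, Pi.one_apply, smul_eq_mul, sub_nonneg] at hA₀vi
    exact pos_of_mul_pos_right (one_pos.trans_le hA₀vi) hα.le
  by_contra! hi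
  set C := A₀.updateRow i (A i)
  have hCmem : C ∈ IRU rows := updateRow_mem_IRU hA₀ (hA i)
  have hCv : C *ᵥ v = Function.update (α • v - 1) i ((A *ᵥ v) i) := by
    rw [updateRow_mulVec, hA₀v]
    rfl
  have hv : α • v - 1 < C *ᵥ v := hCv ▸ lt_update_self_iff.2 hi
  exact (Fintype.sum_strictMono (lt_resolventVec_of_lt_mulVec (hC C hCmem) (hρ C hCmem) hv)).not_ge
    (hmax hCmem)

end IRU

end

theorem stmt15 {N : ℕ} (rows : Fin N → Set (Fin N → ℝ))
    (hne : ∀ i, (rows i).Nonempty) (hcomp : ∀ i, IsCompact (rows i))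
    (hnn : ∀ i, ∀ a ∈ rows i, ∀ j, 0 ≤ a j) (α : ℝ) (hα : 0 < α) :
    (∀ A ∈ IRU rows, specRad A < α) ↔
      ∃ v : Fin N → ℝ, (∀ i, 0 < v i) ∧ ∀ A ∈ IRU rows, ∀ i, A.mulVec v i < α * v i := by
  constructor
  · intro hρ
    obtain ⟨v, hv, hAv⟩ := exists_pos_forall_mulVec_le_smul_sub_one hne hcomp hnn hα hρ
    exact ⟨v, hv, fun A hA i => (hAv A hA i).trans_lt (sub_lt_self _ one_pos)⟩
  · rintro ⟨v, hv, hAv⟩ A hA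
    exact specRad_lt_of_mulVec_lt (row_nonneg_of_mem_IRU hnn hA) hv hα (hAv A hA)
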